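/- Let a₁, …, a_N ∈ ℝᵐ be linearly independent and b ∈ ℝᵐ, and define f(u) = ‖u‖² + Σᵢ ⟨aᵢ, u⟩² + ⟨b, u⟩. Then u* = -(1/2) b is a global minimizer of f over ℝᵐ if and only if ⟨aᵢ, b⟩ = 0 for every i ∈ {1, …, N}. -/
import Mathlib


open RealInnerProductSpace

/-- For `f(u) = ‖u‖² + Σᵢ ⟨aᵢ, u⟩² + ⟨b, u⟩` with `a₁, …, a_N` linearly independent,
`u* = -(1/2) b` is a global minimizer of `f` iff `⟨aᵢ, b⟩ = 0` for every `i`. -/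
theorem stmt14 (m N : ℕ) (a : Fin N → EuclideanSpace ℝ (Fin m)) (ha : LinearIndependent ℝ a)
    (b : EuclideanSpace ℝ (Fin m))
    (f : EuclideanSpace ℝ (Fin m) → ℝ)
    (hf : ∀ u, f u = ‖u‖ ^ 2 + (∑ i, ⟪a i, u⟫ ^ 2) + ⟪b, u⟫) :
    (∀ u : EuclideanSpace ℝ (Fin m), f ((-(1/2) : ℝ) • b) ≤ f u) ↔ ∀ i, ⟪a i, b⟫ = 0 := by
  have hns : ∀ (c : ℝ), ‖(c : ℝ) • b‖ ^ 2 = c ^ 2 * ‖b‖ ^ 2 := by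
    intro c; rw [norm_smul]; rw [mul_pow]; simp [sq_abs]
  have hsum : ∀ (c : ℝ), (∑ i, ⟪a i, (c : ℝ) • b⟫ ^ 2) = c ^ 2 * ∑ i, ⟪a i, b⟫ ^ 2 := by
    intro c
    rw [Finset.mul_sum]
    refine Finset.sum_congr rfl fun i _ => ?_
    rw [real_inner_smul_right]; ring
  have hbb : ∀ (c : ℝ), ⟪b, (c : ℝ) • b⟫ = c * ‖b‖ ^ 2 := by
    intro c; rw [real_inner_smul_right, real_inner_self_eq_norm_sq]
  constructor
  · intro hmin i
    by_contra hib
    set B := ‖b‖ ^ 2 with hB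
    set S := ∑ j, ⟪a j, b⟫ ^ 2 with hS
    have hSpos : 0 < S :=
      Finset.sum_pos' (fun j _ => sq_nonneg _) ⟨i, Finset.mem_univ i, by positivity⟩
    have hBnn : 0 ≤ B := sq_nonneg _
    have hden : 0 < B + S := by linarith
    set s : ℝ := B / (B + S) with hs
    have hs' : s * (B + S) = B := div_mul_cancel₀ _ (ne_of_gt hden)
    have key := hmin ((-(s / 2) : ℝ) • b)
    rw [hf, hf, hns, hns, hsum, hsum, hbb, hbb] at key
    nlinarith [sq_nonneg (s - 1), sq_nonneg S, mul_pos hSpos hSpos, mul_pos hden hSpos]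
  · intro h u
    rw [hf, hf, hns, hsum, hbb]
    have h0 : (∑ i, ⟪a i, b⟫ ^ 2) = 0 := by
      refine Finset.sum_eq_zero fun i _ => ?_
      rw [h i]; ring
    have hpos : 0 ≤ (∑ i, ⟪a i, u⟫ ^ 2) := Finset.sum_nonneg fun i _ => sq_nonneg _
    have hexp : ‖u + ((1/2 : ℝ)) • b‖ ^ 2
        = ‖u‖ ^ 2 + 2 * ((1/2 : ℝ) * ⟪b, u⟫) + (1/2 : ℝ) ^ 2 * ‖b‖ ^ 2 := by
      rw [norm_add_sq_real, real_inner_smul_right, hns, real_inner_comm]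
    nlinarith [sq_nonneg ‖u + ((1/2 : ℝ)) • b‖]
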